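/- arXiv:0804.3781 — 2 statements merged into one kernel-verified Lean document; each statement's English description precedes it below -/
import Mathlib

section
/- Let π_0, π_1, ..., π_n act on words x = (x_1,...,x_{n+1}) that are permutations of {1,...,n+1}, where for 1 ≤ i ≤ n, π_i swaps x_i and x_{i+1} if x_i > x_{i+1} (else fixes x), and π_0 swaps x_{n+1} and x_1 if x_{n+1} > x_1 (else fixes x). Then the monoid generated by π_0, π_1, ..., π_n acts transitively on the set of all permutations of {1,...,n+1}: for any two permutations u, v there is a composition of these operators mapping u to v. -/
open Equiv

/-- The circular bubble-sort operators on one-line words of permutations of `{1,…,n+1}`,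
indexed cyclically: for `j : Fin (n+1)`, swap the entries in (cyclically adjacent)
positions `j` and `j+1` if the entry at `j` is greater than the entry at `j+1`, else fix.
The operator with `j = Fin.last n` is the affine operator `π_0` (comparing the last and
first letters); the operators with `j ≠ Fin.last n` are `π_1, …, π_n`. -/
def cpi {n : ℕ} (j : Fin (n + 1)) (w : Perm (Fin (n + 1))) : Perm (Fin (n + 1)) :=
  if w (j + 1) < w j then w * Equiv.swap j (j + 1) else w

/-!
Letters are `0, …, n` and `w k` is the letter at position `k`. Let `G_M` (`prefixPerms M`) be
the words that have letter `k` at position `k` for every `k > M`. Bubbling the letter `M` of a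
word in `G_M` rightwards to position `M` lands in `G_{M-1}`, so every word sorts to the identity.

Conversely, for `M < n` every word `a_0 ⋯ a_M (M+1) ⋯ n` of `G_M` reaches its prefix rotation
`a_1 ⋯ a_M a_0 (M+1) ⋯ n`.
For `M = n - 1` this is `π_0`, which moves the letter `n` to the front, followed by bubbling `n`
back to the end; for smaller `M`, first rotate the prefix of length `M + 2` and then let `M + 1`
pass `a_0`. Powers of the rotation, and at the top level `π_0` followed by bubbling `n` to an
arbitrary position, carry some word of `G_{M-1}` to any given word of `G_M`, so by induction on
`M` the identity reaches every word.
-/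

open Fin Relation

namespace Fin

variable {n : ℕ}

theorem cycleIcc_castSucc_succ (i : Fin n) :
    cycleIcc i.castSucc i.succ = swap i.castSucc i.succ := by
  ext x
  rcases lt_trichotomy x i.castSucc with hx | rfl | hx
  · rw [cycleIcc_of_lt hx, swap_apply_of_ne_of_ne hx.ne (hx.trans castSucc_lt_succ).ne]
  · rw [cycleIcc_of_ge_of_lt le_rfl castSucc_lt_succ, coeSucc_eq_succ, swap_apply_left]
  · rcases (castSucc_lt_iff_succ_le.1 hx).eq_or_lt with rfl | hx'
    · rw [cycleIcc_of_last castSucc_lt_succ.le, swap_apply_right]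
    · rw [cycleIcc_of_gt hx', swap_apply_of_ne_of_ne hx.ne' hx'.ne']

theorem cycleIcc_castSucc_mul_swap {p : Fin (n + 1)} {i : Fin n} (hp : p ≤ i.castSucc) :
    cycleIcc p i.castSucc * swap i.castSucc i.succ = cycleIcc p i.succ := by
  rw [← cycleIcc_castSucc_succ]
  exact DFunLike.coe_injective (cycleIcc.trans hp (castSucc_le_succ i))

theorem cycleRange_succ_mul_swap (i : Fin n) :
    cycleRange i.succ * swap i.castSucc i.succ = cycleRange i.castSucc := by
  rw [← cycleIcc_zero_eq_cycleRange, ← cycleIcc_zero_eq_cycleRange,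
    ← cycleIcc_castSucc_mul_swap (Fin.zero_le _), mul_assoc, swap_mul_self, mul_one]

theorem swap_last_zero_mul_cycleRange_last {i : Fin n} (hi : i.succ = last n) :
    swap (last n) 0 * cycleRange (last n) = cycleRange i.castSucc := by
  have hfix : (cycleRange i.castSucc)⁻¹ (last n) = last n := by
    rw [Perm.inv_eq_iff_eq, cycleRange_of_gt (hi ▸ castSucc_lt_succ)]
  rw [← cycleIcc_zero_eq_cycleRange, ← hi, ← cycleIcc_castSucc_mul_swap (Fin.zero_le _),
    cycleIcc_zero_eq_cycleRange, ← mul_assoc, swap_mul_eq_mul_swap, hi, hfix, Perm.inv_def,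
    cycleRange_symm_zero, mul_assoc, swap_comm, swap_mul_self, mul_one]

end Fin

namespace CircularBubbleSort

variable {n : ℕ}

abbrev Reaches (u v : Perm (Fin (n + 1))) : Prop :=
  ReflTransGen (fun w w' => ∃ j, cpi j w = w') u v

theorem exists_foldl_eq_of_reaches {u v : Perm (Fin (n + 1))} (h : Reaches u v) :
    ∃ l : List (Fin (n + 1)), l.foldl (fun w j => cpi j w) u = v := by
  induction h with
  | refl => exact ⟨[], rfl⟩
  | tail _ hstep ih =>
    obtain ⟨l, rfl⟩ := ih
    obtain ⟨j, rfl⟩ := hstep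
    exact ⟨l ++ [j], List.foldl_concat ..⟩

theorem reaches_mul_swap {w : Perm (Fin (n + 1))} {j : Fin (n + 1)} (h : w (j + 1) < w j) :
    Reaches w (w * swap j (j + 1)) :=
  .single ⟨j, if_pos h⟩

theorem reaches_mul_swap_castSucc_succ {w : Perm (Fin (n + 1))} {i : Fin n}
    (h : w i.succ < w i.castSucc) : Reaches w (w * swap i.castSucc i.succ) := by
  rw [← coeSucc_eq_succ] at h ⊢
  exact reaches_mul_swap h

theorem reaches_mul_swap_of_apply_eq_last {w : Perm (Fin (n + 1))} {j : Fin (n + 1)}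
    (hj : w j = last n) : Reaches w (w * swap j (j + 1)) := by
  by_cases hj1 : j + 1 = j
  · rw [hj1, swap_self, ← Perm.one_def, mul_one]
  · exact reaches_mul_swap (hj ▸ lt_last_iff_ne_last.2 (hj ▸ w.injective.ne hj1))

theorem reaches_mul_cycleIcc {w : Perm (Fin (n + 1))} {p q : Fin (n + 1)} (hpq : p ≤ q)
    (hw : ∀ k, p < k → k ≤ q → w k < w p) : Reaches w (w * cycleIcc p q) := by
  induction q using Fin.induction with
  | zero => rw [Fin.le_zero_iff.1 hpq, cycleIcc_eq, mul_one]
  | succ i ih =>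
    rcases hpq.eq_or_lt with rfl | hlt
    · rw [cycleIcc_eq, mul_one]
    have hpi : p ≤ i.castSucc := le_castSucc_iff.2 hlt
    refine (ih hpi fun k hpk hki => hw k hpk (hki.trans (castSucc_le_succ i))).trans ?_
    rw [← cycleIcc_castSucc_mul_swap hpi, ← mul_assoc]
    apply reaches_mul_swap_castSucc_succ
    rw [Perm.mul_apply, Perm.mul_apply, cycleIcc_of_gt castSucc_lt_succ,
      cycleIcc_of_last hpi]
    exact hw _ hlt le_rfl

theorem reaches_mul_swap_mul_cycleIcc {w : Perm (Fin (n + 1))} (hw : w (last n) = last n)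
    (q : Fin (n + 1)) : Reaches w (w * (swap (last n) 0 * cycleIcc 0 q)) := by
  have hstep := reaches_mul_swap_of_apply_eq_last hw
  rw [last_add_one] at hstep
  have hfront : (w * swap (last n) 0) 0 = last n := by rw [Perm.mul_apply, swap_apply_right, hw]
  refine hstep.trans ?_
  rw [← mul_assoc]
  refine reaches_mul_cycleIcc (Fin.zero_le q) fun k hk _ => ?_
  have hne := (w * swap (last n) 0).injective.ne hk.ne'
  rw [hfront] at hne ⊢
  exact lt_last_iff_ne_last.2 hne

def prefixPerms (M : Fin (n + 1)) : Subgroup (Perm (Fin (n + 1))) :=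
  fixingSubgroup _ (Set.Ioi M)

theorem mem_prefixPerms {M : Fin (n + 1)} {w : Perm (Fin (n + 1))} :
    w ∈ prefixPerms M ↔ ∀ k, M < k → w k = k := by
  simp only [prefixPerms, mem_fixingSubgroup_iff, Set.mem_Ioi, Perm.smul_def]

theorem prefixPerms_mono : Monotone (prefixPerms (n := n)) :=
  fun _ _ h => fixingSubgroup_antitone _ _ (Set.Ioi_subset_Ioi h)

theorem apply_le_of_mem_prefixPerms {M k : Fin (n + 1)} {w : Perm (Fin (n + 1))}
    (hw : w ∈ prefixPerms M) (hk : k ≤ M) : w k ≤ M := by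
  by_contra! h
  have hfix : w (w k) = w k := mem_prefixPerms.1 hw _ h
  rw [w.injective hfix] at h
  exact h.not_ge hk

theorem prefixPerms_zero : prefixPerms (0 : Fin (n + 1)) = ⊥ := by
  refine (Subgroup.eq_bot_iff_forall _).2 fun w hw => Equiv.ext fun k => ?_
  rcases (Fin.zero_le k).eq_or_lt with rfl | hk
  · exact Fin.le_zero_iff.1 (apply_le_of_mem_prefixPerms hw le_rfl)
  · exact mem_prefixPerms.1 hw k hk

theorem prefixPerms_last : prefixPerms (last n) = ⊤ :=
  eq_top_iff.2 fun _ _ => mem_prefixPerms.2 fun k hk => absurd hk (not_lt.2 (le_last k))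

theorem mem_prefixPerms_castSucc {i : Fin n} {w : Perm (Fin (n + 1))} :
    w ∈ prefixPerms i.castSucc ↔ w ∈ prefixPerms i.succ ∧ w i.succ = i.succ := by
  simp only [mem_prefixPerms, castSucc_lt_iff_succ_le, le_iff_eq_or_lt, or_imp, forall_and,
    forall_eq', and_comm]

theorem cycleRange_mem_prefixPerms (M : Fin (n + 1)) : cycleRange M ∈ prefixPerms M :=
  mem_prefixPerms.2 fun _ => cycleRange_of_gt

theorem exists_mem_prefixPerms_castSucc_reaches {i : Fin n} {w : Perm (Fin (n + 1))}
    (hw : w ∈ prefixPerms i.succ) : ∃ w' ∈ prefixPerms i.castSucc, Reaches w w' := by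
  set p := w⁻¹ i.succ
  have hwp : w p = i.succ := w.apply_symm_apply _
  have hp : p ≤ i.succ := apply_le_of_mem_prefixPerms (inv_mem hw) le_rfl
  refine ⟨w * cycleIcc p i.succ, mem_prefixPerms_castSucc.2 ⟨mul_mem hw ?_, ?_⟩,
    reaches_mul_cycleIcc hp fun k hpk hk => ?_⟩
  · exact mem_prefixPerms.2 fun _ => cycleIcc_of_gt
  · rw [Perm.mul_apply, cycleIcc_of_last hp, hwp]
  · exact hwp ▸ (apply_le_of_mem_prefixPerms hw hk).lt_of_ne (hwp ▸ w.injective.ne hpk.ne')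

theorem reaches_one {M : Fin (n + 1)} {w : Perm (Fin (n + 1))} (hw : w ∈ prefixPerms M) :
    Reaches w 1 := by
  induction M using Fin.induction generalizing w with
  | zero =>
    rw [prefixPerms_zero, Subgroup.mem_bot] at hw
    exact hw ▸ .refl
  | succ i ih =>
    obtain ⟨w', hw', hww'⟩ := exists_mem_prefixPerms_castSucc_reaches hw
    exact hww'.trans (ih hw')

theorem reaches_mul_cycleRange {M : Fin (n + 1)} (hM : M ≠ last n) {w : Perm (Fin (n + 1))}
    (hw : w ∈ prefixPerms M) : Reaches w (w * cycleRange M) := by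
  induction M using Fin.reverseInduction generalizing w with
  | last => exact absurd rfl hM
  | cast i ih =>
    obtain ⟨hw', hwi⟩ := mem_prefixPerms_castSucc.1 hw
    by_cases hi : i.succ = last n
    · have h := reaches_mul_swap_mul_cycleIcc (hi ▸ hwi) (last n)
      rwa [cycleIcc_zero_eq_cycleRange, swap_last_zero_mul_cycleRange_last hi] at h
    · rw [← cycleRange_succ_mul_swap, ← mul_assoc]
      refine (ih hi hw').trans (reaches_mul_swap_castSucc_succ ?_)
      rw [Perm.mul_apply, Perm.mul_apply, cycleRange_self, cycleRange_of_lt castSucc_lt_succ,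
        coeSucc_eq_succ, hwi]
      exact (apply_le_of_mem_prefixPerms hw (Fin.zero_le _)).trans_lt castSucc_lt_succ

theorem reaches_mul_pow {H : Subgroup (Perm (Fin (n + 1)))} {g : Perm (Fin (n + 1))} (hg : g ∈ H)
    (h : ∀ w ∈ H, Reaches w (w * g)) {w : Perm (Fin (n + 1))} (hw : w ∈ H) (j : ℕ) :
    Reaches w (w * g ^ j) := by
  induction j with
  | zero => rw [pow_zero, mul_one]
  | succ j ih =>
    rw [pow_succ, ← mul_assoc]
    exact ih.trans (h _ (mul_mem hw (pow_mem hg j)))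

theorem exists_mem_prefixPerms_reaches_mul {i : Fin n} {q : Fin (n + 1)} (hq : q ≤ i.succ) :
    ∃ g ∈ prefixPerms i.succ, g q = i.succ ∧
      ∀ w ∈ prefixPerms i.castSucc, Reaches w (w * g) := by
  by_cases hi : i.succ = last n
  · refine ⟨swap (last n) 0 * cycleIcc 0 q, ?_, ?_,
      fun w hw => reaches_mul_swap_mul_cycleIcc ?_ q⟩
    · rw [hi, prefixPerms_last]
      exact Subgroup.mem_top _
    · rw [Perm.mul_apply, cycleIcc_of_last (Fin.zero_le q), swap_apply_right, hi]
    · exact hi ▸ (mem_prefixPerms_castSucc.1 hw).2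
  · have hq' : cycleRange i.succ q ≠ q := by
      rw [cycleRange_of_le hq]
      split_ifs with h
      · exact h ▸ (succ_ne_zero i).symm
      · exact (lt_add_one_iff.2 ((lt_of_le_of_ne hq h).trans_le (le_last _))).ne'
    obtain ⟨j, hj⟩ := (isCycle_cycleRange (succ_ne_zero i)).exists_pow_eq hq'
      (by rw [cycleRange_self]; exact (succ_ne_zero i).symm)
    refine ⟨cycleRange i.succ ^ j, pow_mem (cycleRange_mem_prefixPerms _) j, hj,
      fun w hw => reaches_mul_pow (cycleRange_mem_prefixPerms _)
        (fun _ hx => reaches_mul_cycleRange hi hx) (prefixPerms_mono (castSucc_le_succ i) hw) j⟩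

theorem one_reaches {M : Fin (n + 1)} {v : Perm (Fin (n + 1))} (hv : v ∈ prefixPerms M) :
    Reaches 1 v := by
  induction M using Fin.induction generalizing v with
  | zero =>
    rw [prefixPerms_zero, Subgroup.mem_bot] at hv
    exact hv ▸ .refl
  | succ i ih =>
    obtain ⟨g, hg, hgq, hreach⟩ :=
      exists_mem_prefixPerms_reaches_mul (apply_le_of_mem_prefixPerms (inv_mem hv) le_rfl)
    have hv' : v * g⁻¹ ∈ prefixPerms i.castSucc := by
      refine mem_prefixPerms_castSucc.2 ⟨mul_mem hv (inv_mem hg), ?_⟩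
      rw [Perm.mul_apply, Perm.inv_eq_iff_eq.2 hgq.symm]
      exact v.apply_symm_apply _
    simpa using (ih hv').trans (hreach _ hv')

end CircularBubbleSort

open CircularBubbleSort in
/-- The monoid generated by the circular bubble-sort operators `π_0, π_1, …, π_n` acts
transitively on permutations of `{1,…,n+1}`: any `u` can be mapped to any `v`. -/
theorem cpi_transitive (n : ℕ) (u v : Perm (Fin (n + 1))) :
    ∃ l : List (Fin (n + 1)), l.foldl (fun w j => cpi j w) u = v := by
  have hu : u ∈ prefixPerms (last n) := prefixPerms_last ▸ Subgroup.mem_top u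
  have hv : v ∈ prefixPerms (last n) := prefixPerms_last ▸ Subgroup.mem_top v
  exact exists_foldl_eq_of_reaches ((reaches_one hu).trans (one_reaches hv))
end

section
/- For a word x = (x_1,...,x_{n+1}) with x_1 = n+1 (the maximal letter), the composition π_0 π_n π_{n-1} ⋯ π_1 (first π_1, then π_2, ..., up to π_n, then π_0) cyclically rotates the last n letters one step to the left while keeping the maximal letter fixed in position 1: the result is (n+1, x_3, x_4, ..., x_{n+1}, x_2). -/
/-!
The maximal letter in position 1 wins every comparison it takes part in, so π_1, …, π_k each
carry it one step to the right: after them the word is `x ∘ (0 1 … k)` (`Fin.cycleRange k`).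
After π_n this cycle is the full rotation `finRotate`, and π_0 swaps the maximal letter from
the last position back to the first.
-/

open Equiv

theorem List.take_succ_finRange {n : ℕ} (i : Fin n) :
    (List.finRange n).take (i + 1) = (List.finRange n).take i ++ [i] := by
  simp [List.take_add_one]

theorem Fin.cycleRange_castSucc_mul_swap {n : ℕ} (i : Fin n) :
    Fin.cycleRange i.castSucc * swap i.castSucc i.succ = Fin.cycleRange i.succ := by
  ext j
  rw [Perm.mul_apply]
  rcases lt_trichotomy j i.castSucc with hj | rfl | hj
  · rw [swap_apply_of_ne_of_ne hj.ne (hj.trans Fin.castSucc_lt_succ).ne,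
      Fin.cycleRange_of_lt hj, Fin.cycleRange_of_lt (hj.trans Fin.castSucc_lt_succ)]
  · rw [swap_apply_left, Fin.cycleRange_of_gt Fin.castSucc_lt_succ,
      Fin.cycleRange_of_lt Fin.castSucc_lt_succ, Fin.coeSucc_eq_succ]
  · rcases eq_or_ne j i.succ with rfl | hj'
    · rw [swap_apply_right, Fin.cycleRange_self, Fin.cycleRange_self]
    · have hj'' : i.succ < j := lt_of_le_of_ne (Fin.castSucc_lt_iff_succ_le.mp hj) hj'.symm
      rw [swap_apply_of_ne_of_ne hj.ne' hj', Fin.cycleRange_of_gt hj, Fin.cycleRange_of_gt hj'']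

-- Equality forces `j + 1 = j` (so `n = 0`), where the swap is trivial.
theorem cpi_eq_mul_swap_of_le {n : ℕ} {j : Fin (n + 1)} {w : Perm (Fin (n + 1))}
    (h : w (j + 1) ≤ w j) : cpi j w = w * swap j (j + 1) := by
  rcases h.lt_or_eq with hlt | heq
  · exact if_pos hlt
  · rw [cpi, if_neg heq.not_lt, w.injective heq, swap_self, ← Perm.one_def, mul_one]

section MaxFirst

variable {n : ℕ} {x : Perm (Fin (n + 1))}

theorem foldl_cpi_take_finRange (hmax : ∀ i, x i ≤ x 0) (i : Fin (n + 1)) :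
    ((List.finRange (n + 1)).take i).foldl (fun w j => cpi j w) x = x * Fin.cycleRange i := by
  induction i using Fin.induction with
  | zero => simp
  | succ i ih =>
    have hpass : (x * Fin.cycleRange i.castSucc) i.succ
        ≤ (x * Fin.cycleRange i.castSucc) i.castSucc := by
      rw [Perm.mul_apply, Perm.mul_apply, Fin.cycleRange_of_gt Fin.castSucc_lt_succ,
        Fin.cycleRange_self]
      exact hmax _
    rw [Fin.val_succ, ← Fin.val_castSucc, List.take_succ_finRange, List.foldl_append, ih,
      List.foldl_cons, List.foldl_nil, cpi_eq_mul_swap_of_le (Fin.coeSucc_eq_succ ▸ hpass),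
      Fin.coeSucc_eq_succ, mul_assoc, Fin.cycleRange_castSucc_mul_swap]

theorem foldl_cpi_finRange (hmax : ∀ i, x i ≤ x 0) :
    (List.finRange (n + 1)).foldl (fun w j => cpi j w) x
      = x * finRotate (n + 1) * swap (Fin.last n) 0 := by
  have hsplit : List.finRange (n + 1)
      = (List.finRange (n + 1)).take (Fin.last n) ++ [Fin.last n] := by
    rw [← List.take_succ_finRange, Fin.val_last, List.take_of_length_le (by simp)]
  have hpass :
      (x * finRotate (n + 1)) (Fin.last n + 1) ≤ (x * finRotate (n + 1)) (Fin.last n) := by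
    rw [Perm.mul_apply, Perm.mul_apply, finRotate_last, Fin.last_add_one]
    exact hmax _
  rw [hsplit, List.foldl_append, foldl_cpi_take_finRange hmax, Fin.cycleRange_last,
    List.foldl_cons, List.foldl_nil, cpi_eq_mul_swap_of_le hpass, Fin.last_add_one]

end MaxFirst

/-- If `x_1 = n+1` (the maximal letter), then applying first `π_1`, …, then `π_n`, then
`π_0` rotates the last `n` letters cyclically one step to the left, keeping the maximal
letter in position 1: the result is `(n+1, x_3, x_4, …, x_{n+1}, x_2)`. -/
theorem cpi_rotate (n : ℕ) (x : Perm (Fin (n + 1))) (h : x 0 = Fin.last n) :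
    letI y := (List.finRange (n + 1)).foldl (fun w j => cpi j w) x
    y 0 = Fin.last n ∧ y (Fin.last n) = x 1 ∧
      ∀ j : Fin (n + 1), j ≠ 0 → j ≠ Fin.last n → y j = x (j + 1) := by
  have hmax : ∀ i, x i ≤ x 0 := fun i => h ▸ Fin.le_last (x i)
  simp only [foldl_cpi_finRange hmax, Perm.mul_apply, finRotate_apply]
  refine ⟨?_, ?_, fun j hj hjl => ?_⟩
  · rw [swap_apply_right, Fin.last_add_one, h]
  · rw [swap_apply_left, zero_add]
  · rw [swap_apply_of_ne_of_ne hjl hj]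
end
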